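/- If G contains a clique {v_{γ_1},…,v_{γ_k}} of size k (k distinct, pairwise adjacent vertices), then the 2k directed paths Canonical_edge(γ_i; a_i⇝b_i) for i ∈ [k] and Canonical_edge(γ_j; c_j⇝d_j) for j ∈ [k] are pairwise edge-disjoint and each is a shortest path in D_edge between its terminal pair; in particular all 2k terminal pairs of (D_edge, T) can be simultaneously satisfied by pairwise edge-disjoint shortest paths. -/

import Mathlib

/-- A directed path (self-avoiding walk) from `s` to `t` in the digraph with
edge relation `E`, given as the list of its vertices in order. -/
structure IsPathList {V : Type*} (E : V → V → Prop) (s t : V) (p : List V) : Prop where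
  chain : p.Chain' E
  nodup : p.Nodup
  head : p.head? = some s
  last : p.getLast? = some t

/-- A shortest directed `s⇝t` path, where the length of a path is its number of vertices. -/
def IsShortestDirPath {V : Type*} (E : V → V → Prop) (s t : V) (p : List V) : Prop :=
  IsPathList E s t p ∧ ∀ q : List V, IsPathList E s t q → p.length ≤ q.length

/-- Symmetrization of a relation: the adjacency of the undirected graph obtained by
forgetting the orientation of the edges. -/
def UAdj {V : Type*} (E : V → V → Prop) (x y : V) : Prop := E x y ∨ E y x

/-- The cost of a path: the sum of the costs of its vertices. -/
def pathCost {V : Type*} (cost : V → ℕ) (p : List V) : ℕ := (p.map cost).sum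

/-- A shortest (minimum-cost) `s`–`t` path in the undirected graph obtained from `E`. -/
def IsShortestCostPath {V : Type*} (E : V → V → Prop) (cost : V → ℕ) (s t : V)
    (p : List V) : Prop :=
  IsPathList (UAdj E) s t p ∧
    ∀ q : List V, IsPathList (UAdj E) s t q → pathCost cost p ≤ pathCost cost q

/-- The (directed) edges traversed by a path, as ordered pairs of consecutive vertices. -/
def dirEdges {V : Type*} (p : List V) : List (V × V) := p.zip p.tail

/-- Two directed paths are edge-disjoint. -/
def EdgeDisj {V : Type*} (p q : List V) : Prop := ∀ e ∈ dirEdges p, e ∉ dirEdges q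

/-- The (undirected) edges traversed by a path, as unordered pairs. -/
def uEdges {V : Type*} (p : List V) : List (Sym2 V) := (dirEdges p).map fun e => s(e.1, e.2)

/-- Two undirected paths are edge-disjoint. -/
def UEdgeDisj {V : Type*} (p q : List V) : Prop := ∀ e ∈ uEdges p, e ∉ uEdges q

/-- Two paths are vertex-disjoint. -/
def VertDisj {V : Type*} (p q : List V) : Prop := ∀ v ∈ p, v ∉ q

/-- `(q,ℓ) ∈ S_{i,j}`: for `i = j` this means `q = ℓ` and for `i ≠ j` it means that
`v_q v_ℓ` is an edge of `G`. -/
def Split {k N : ℕ} (G : SimpleGraph (Fin N)) (i j : Fin k) (q ℓ : Fin N) : Prop :=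
  (i = j ∧ q = ℓ) ∨ (i ≠ j ∧ G.Adj q ℓ)

instance {k N : ℕ} (G : SimpleGraph (Fin N)) [DecidableRel G.Adj]
    (i j : Fin k) (q ℓ : Fin N) : Decidable (Split G i j q ℓ) := by
  unfold Split; infer_instance

/-- The tags of the copies into which a grid vertex of `D_int` is split in `D_edge`. -/
inductive ETag where
  | LB | Mid | Hor | Ver | TR
  deriving DecidableEq

/-- The vertices of the graph `D_edge` (also the vertex set of `U_edge`): each grid
vertex `w_{i,j}^{q,ℓ}` of `D_int` gives rise to copies `w_LB, w_Mid, w_Hor, w_Ver, w_TR`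
(of which only `{LB, Mid, TR}`, respectively `{LB, Hor, Ver, TR}`, carry edges,
according to whether `w` is one-split or two-split), plus the terminal vertices. -/
inductive DEdgeV (k N : ℕ) where
  | grid (i j : Fin k) (q ℓ : Fin N) (t : ETag)
  | a (i : Fin k)
  | b (i : Fin k)
  | c (j : Fin k)
  | d (j : Fin k)
  deriving DecidableEq

/-- The directed edges of `D_edge`. -/
inductive DEdgeE (k N : ℕ) (G : SimpleGraph (Fin N)) : DEdgeV k N → DEdgeV k N → Prop where
  /-- one-split: `w_LB → w_Mid` -/
  | mid1 (i j : Fin k) (q ℓ : Fin N) (h : ¬ Split G i j q ℓ) :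
      DEdgeE k N G (.grid i j q ℓ .LB) (.grid i j q ℓ .Mid)
  /-- one-split: `w_Mid → w_TR` -/
  | mid2 (i j : Fin k) (q ℓ : Fin N) (h : ¬ Split G i j q ℓ) :
      DEdgeE k N G (.grid i j q ℓ .Mid) (.grid i j q ℓ .TR)
  /-- two-split: `w_LB → w_Hor` -/
  | hor1 (i j : Fin k) (q ℓ : Fin N) (h : Split G i j q ℓ) :
      DEdgeE k N G (.grid i j q ℓ .LB) (.grid i j q ℓ .Hor)
  /-- two-split: `w_Hor → w_TR` -/
  | hor2 (i j : Fin k) (q ℓ : Fin N) (h : Split G i j q ℓ) :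
      DEdgeE k N G (.grid i j q ℓ .Hor) (.grid i j q ℓ .TR)
  /-- two-split: `w_LB → w_Ver` -/
  | ver1 (i j : Fin k) (q ℓ : Fin N) (h : Split G i j q ℓ) :
      DEdgeE k N G (.grid i j q ℓ .LB) (.grid i j q ℓ .Ver)
  /-- two-split: `w_Ver → w_TR` -/
  | ver2 (i j : Fin k) (q ℓ : Fin N) (h : Split G i j q ℓ) :
      DEdgeE k N G (.grid i j q ℓ .Ver) (.grid i j q ℓ .TR)
  /-- former edge `w_{i,j}^{q,ℓ} → w_{i,j}^{q,ℓ+1}` -/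
  | up (i j : Fin k) (q ℓ ℓ' : Fin N) (h : (ℓ' : ℕ) = (ℓ : ℕ) + 1) :
      DEdgeE k N G (.grid i j q ℓ .TR) (.grid i j q ℓ' .LB)
  /-- former edge `w_{i,j}^{q,ℓ} → w_{i,j}^{q+1,ℓ}` -/
  | right (i j : Fin k) (q q' ℓ : Fin N) (h : (q' : ℕ) = (q : ℕ) + 1) :
      DEdgeE k N G (.grid i j q ℓ .TR) (.grid i j q' ℓ .LB)
  /-- former edge `w_{i,j}^{N,ℓ} → w_{i+1,j}^{1,ℓ}` -/
  | hmatch (i i' j : Fin k) (q q' ℓ : Fin N)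
      (hi : (i' : ℕ) = (i : ℕ) + 1) (hq : (q : ℕ) + 1 = N) (hq' : (q' : ℕ) = 0) :
      DEdgeE k N G (.grid i j q ℓ .TR) (.grid i' j q' ℓ .LB)
  /-- former edge `w_{i,j}^{ℓ,N} → w_{i,j+1}^{ℓ,1}` -/
  | vmatch (i j j' : Fin k) (q ℓ ℓ' : Fin N)
      (hj : (j' : ℕ) = (j : ℕ) + 1) (hl : (ℓ : ℕ) + 1 = N) (hl' : (ℓ' : ℕ) = 0) :
      DEdgeE k N G (.grid i j q ℓ .TR) (.grid i j' q ℓ' .LB)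
  /-- former edge `a_i → w_{i,1}^{q,1}` -/
  | srcA (i j : Fin k) (q ℓ : Fin N) (hj : (j : ℕ) = 0) (hl : (ℓ : ℕ) = 0) :
      DEdgeE k N G (.a i) (.grid i j q ℓ .LB)
  /-- former edge `w_{i,k}^{q,N} → b_i` -/
  | snkB (i j : Fin k) (q ℓ : Fin N) (hj : (j : ℕ) + 1 = k) (hl : (ℓ : ℕ) + 1 = N) :
      DEdgeE k N G (.grid i j q ℓ .TR) (.b i)
  /-- former edge `c_j → w_{1,j}^{1,ℓ}` -/
  | srcC (i j : Fin k) (q ℓ : Fin N) (hi : (i : ℕ) = 0) (hq : (q : ℕ) = 0) :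
      DEdgeE k N G (.c j) (.grid i j q ℓ .LB)
  /-- former edge `w_{k,j}^{N,ℓ} → d_j` -/
  | snkD (i j : Fin k) (q ℓ : Fin N) (hi : (i : ℕ) + 1 = k) (hq : (q : ℕ) + 1 = N) :
      DEdgeE k N G (.grid i j q ℓ .TR) (.d j)

/-- The three vertices `w_LB, w_?, w_TR` replacing a grid vertex `w` on (the image of)
a canonical path: the middle vertex is `w_Mid` if `w` is one-split, and is chosen among
`w_Hor` / `w_Ver` (according to `b`) if `w` is two-split. -/
def eTriple {k N : ℕ} (G : SimpleGraph (Fin N)) [DecidableRel G.Adj]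
    (i j : Fin k) (q ℓ : Fin N) (b : Bool) : List (DEdgeV k N) :=
  [DEdgeV.grid i j q ℓ ETag.LB,
   DEdgeV.grid i j q ℓ
     (if Split G i j q ℓ then (if b then ETag.Hor else ETag.Ver) else ETag.Mid),
   DEdgeV.grid i j q ℓ ETag.TR]

/-- An image in `D_edge`/`U_edge` of the horizontal canonical path
`Canonical(r; c_j⇝d_j)` of `D_int`, determined by a choice `χ` of `Hor`/`Ver`
at each two-split vertex. -/
def imageH {k N : ℕ} (G : SimpleGraph (Fin N)) [DecidableRel G.Adj]
    (χ : Fin k → Fin N → Bool) (j : Fin k) (r : Fin N) : List (DEdgeV k N) :=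
  DEdgeV.c j ::
    (((List.finRange k).flatMap fun i =>
        (List.finRange N).flatMap fun q => eTriple G i j q r (χ i q)) ++ [DEdgeV.d j])

/-- An image in `D_edge`/`U_edge` of the vertical canonical path
`Canonical(r; a_i⇝b_i)` of `D_int`, determined by a choice `χ` of `Hor`/`Ver`
at each two-split vertex. -/
def imageV {k N : ℕ} (G : SimpleGraph (Fin N)) [DecidableRel G.Adj]
    (χ : Fin k → Fin N → Bool) (i : Fin k) (r : Fin N) : List (DEdgeV k N) :=
  DEdgeV.a i ::
    (((List.finRange k).flatMap fun j =>
        (List.finRange N).flatMap fun ℓ => eTriple G i j r ℓ (χ j ℓ)) ++ [DEdgeV.b i])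

/-- `Canonical_edge(r; c_j⇝d_j)`: the image of `Canonical(r; c_j⇝d_j)` choosing
`w_LB → w_Hor → w_TR` at every two-split vertex. -/
def canonEdgeH {k N : ℕ} (G : SimpleGraph (Fin N)) [DecidableRel G.Adj]
    (j : Fin k) (r : Fin N) : List (DEdgeV k N) :=
  imageH G (fun _ _ => true) j r

/-- `Canonical_edge(r; a_i⇝b_i)`: the image of `Canonical(r; a_i⇝b_i)` choosing
`w_LB → w_Ver → w_TR` at every two-split vertex. -/
def canonEdgeV {k N : ℕ} (G : SimpleGraph (Fin N)) [DecidableRel G.Adj]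
    (i : Fin k) (r : Fin N) : List (DEdgeV k N) :=
  imageV G (fun _ _ => false) i r

/-!
Let `colPos` be the position along the vertical direction of `D_edge` (three steps per grid
column, counted from `a_i`). No edge of `D_edge` raises it by more than one, while every image of
a vertical canonical path raises it by exactly one per step, so these images are shortest paths;
the horizontal ones are handled by reflecting `D_edge` in its diagonal. Vertical paths for
different `i` (horizontal paths for different `j`) are even vertex-disjoint. The vertical path
for `i` and the horizontal path for `j` meet only at the crossing vertex
`w = w_{i,j}^{γ_i,γ_j}`, which is two-split because `γ` is a clique; since one path uses `w_Ver`
and the other `w_Hor`, they share only `w_LB` and `w_TR`, and no edge joins these two.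
-/

section Lists

variable {α V : Type*}

theorem List.isChain_flatMap {R : V → V → Prop} {l : List α} {g : α → List V}
    (hne : ∀ a ∈ l, g a ≠ []) (hg : ∀ a ∈ l, (g a).IsChain R)
    (hl : l.IsChain fun a b => ∀ x ∈ (g a).getLast?, ∀ y ∈ (g b).head?, R x y) :
    (l.flatMap g).IsChain R := by
  rw [List.flatMap_def, List.isChain_flatten (by simpa using hne)]
  exact ⟨by simpa using hg, (List.isChain_map g).2 hl⟩

theorem isChain_finRange_succ (n : ℕ) :
    (List.finRange n).IsChain fun a b : Fin n => (b : ℕ) = a + 1 :=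
  List.isChain_iff_getElem.2 fun _ _ => by simp

theorem head?_flatMap_finRange {n : ℕ} {g : Fin n → List V} (a : Fin n) (ha : (a : ℕ) = 0)
    (hne : g a ≠ []) : ((List.finRange n).flatMap g).head? = (g a).head? := by
  obtain ⟨n, rfl⟩ : ∃ m, n = m + 1 := ⟨n - 1, by omega⟩
  obtain rfl : a = 0 := Fin.ext ha
  rw [List.finRange_succ, List.flatMap_cons, List.head?_append_of_ne_nil _ hne]

theorem getLast?_flatMap_finRange {n : ℕ} {g : Fin n → List V} (a : Fin n)
    (ha : (a : ℕ) + 1 = n) (hne : g a ≠ []) :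
    ((List.finRange n).flatMap g).getLast? = (g a).getLast? := by
  obtain ⟨n, rfl⟩ : ∃ m, n = m + 1 := ⟨n - 1, by omega⟩
  obtain rfl : a = Fin.last n := Fin.ext (by simp; omega)
  rw [List.finRange_succ_last, List.flatMap_append, List.flatMap_singleton,
    List.getLast?_append_of_ne_nil _ hne]

end Lists

section DirectedPaths

variable {V W : Type*} {E : V → V → Prop}

theorem mem_of_mem_dirEdges {p : List V} {e : V × V} (he : e ∈ dirEdges p) :
    e.1 ∈ p ∧ e.2 ∈ p :=
  ⟨(List.of_mem_zip he).1, List.mem_of_mem_tail (List.of_mem_zip he).2⟩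

theorem List.IsChain.rel_of_mem_dirEdges {R : V → V → Prop} :
    ∀ {p : List V}, p.IsChain R → ∀ {e : V × V}, e ∈ dirEdges p → R e.1 e.2
  | [], _, _, he => by simp [dirEdges] at he
  | [_], _, _, he => by simp [dirEdges] at he
  | _ :: _ :: _, h, _, he => by
    rw [List.isChain_cons_cons] at h
    rcases List.mem_cons.1 he with rfl | he
    · exact h.1
    · exact h.2.rel_of_mem_dirEdges he

theorem VertDisj.edgeDisj {p q : List V} (h : VertDisj p q) : EdgeDisj p q :=
  fun _ he he' => h _ (mem_of_mem_dirEdges he).1 (mem_of_mem_dirEdges he').1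

theorem dirEdges_map (f : V → W) (p : List V) :
    dirEdges (p.map f) = (dirEdges p).map (Prod.map f f) := by
  rw [dirEdges, dirEdges, ← List.map_tail, List.zip_map]

theorem EdgeDisj.map {f : V → W} (hf : Function.Injective f) {p q : List V}
    (h : EdgeDisj p q) : EdgeDisj (p.map f) (q.map f) := by
  intro e he he'
  rw [dirEdges_map, List.mem_map] at he he'
  obtain ⟨e, he, rfl⟩ := he
  obtain ⟨e', he', hee'⟩ := he'
  exact h e he (hf.prodMap hf hee' ▸ he')

theorem IsPathList.map {E' : W → W → Prop} {f : V → W} (hf : Function.Injective f)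
    (hE : ∀ x y, E x y → E' (f x) (f y)) {s t : V} {p : List V} (hp : IsPathList E s t p) :
    IsPathList E' (f s) (f t) (p.map f) where
  chain := (List.isChain_map f).2 (hp.chain.imp fun x y => hE x y)
  nodup := hp.nodup.map hf
  head := by simp [hp.head]
  last := by simp [hp.last]

theorem IsShortestDirPath.map_equiv {E' : W → W → Prop} (f : V ≃ W)
    (hf : ∀ x y, E' (f x) (f y) ↔ E x y) {s t : V} {p : List V}
    (hp : IsShortestDirPath E s t p) : IsShortestDirPath E' (f s) (f t) (p.map f) := by
  refine ⟨hp.1.map f.injective fun x y => (hf x y).2, fun q hq => ?_⟩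
  have hq' : IsPathList E s t (q.map f.symm) := by
    simpa using hq.map f.symm.injective fun x y hxy => (hf _ _).1 (by simpa using hxy)
  simpa using hp.2 _ hq'

section Potential

variable (φ : V → ℕ)

theorem add_length_le_of_isChain (hφ : ∀ x y, E x y → φ y ≤ φ x + 1) :
    ∀ {p : List V} {s t : V}, p.IsChain E → p.head? = some s → p.getLast? = some t →
      φ t + 1 ≤ φ s + p.length
  | [], _, _, _, hs, _ => by simp at hs
  | [_], _, _, _, hs, ht => by simp_all
  | x :: y :: p, s, t, hp, hs, ht => by
    rw [List.isChain_cons_cons] at hp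
    have := add_length_le_of_isChain hφ hp.2 rfl (by rwa [List.getLast?_cons_cons] at ht)
    obtain rfl : x = s := by simpa using hs
    have := hφ _ _ hp.1
    simp only [List.length_cons] at *
    omega

theorem add_length_eq_of_isChain :
    ∀ {p : List V} {s t : V}, p.IsChain (fun x y => φ y = φ x + 1) →
      p.head? = some s → p.getLast? = some t → φ t + 1 = φ s + p.length
  | [], _, _, _, hs, _ => by simp at hs
  | [_], _, _, _, hs, ht => by simp_all
  | x :: y :: p, s, t, hp, hs, ht => by
    rw [List.isChain_cons_cons] at hp
    have := add_length_eq_of_isChain hp.2 rfl (by rwa [List.getLast?_cons_cons] at ht)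
    obtain rfl : x = s := by simpa using hs
    simp only [List.length_cons] at *
    omega

theorem isShortestDirPath_of_tight (hφ : ∀ x y, E x y → φ y ≤ φ x + 1) {s t : V} {p : List V}
    (hp : p.IsChain fun x y => E x y ∧ φ y = φ x + 1) (hs : p.head? = some s)
    (ht : p.getLast? = some t) : IsShortestDirPath E s t p := by
  have hlt : (p.map φ).IsChain (· < ·) := (List.isChain_map φ).2 (hp.imp fun _ _ h => by omega)
  refine ⟨⟨hp.imp fun _ _ h => h.1, ?_, hs, ht⟩, fun q hq => ?_⟩
  · exact List.Nodup.of_map φ (hlt.pairwise.imp ne_of_lt)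
  · have := add_length_eq_of_isChain φ (hp.imp fun _ _ h => h.2) hs ht
    have := add_length_le_of_isChain φ hφ hq.chain hq.head hq.last
    omega

end Potential

end DirectedPaths

section Transpose

variable {k N : ℕ}

theorem Split.swap {G : SimpleGraph (Fin N)} {i j : Fin k} {q ℓ : Fin N}
    (h : Split G i j q ℓ) : Split G j i ℓ q := by
  rcases h with ⟨rfl, rfl⟩ | ⟨hij, hadj⟩
  · exact Or.inl ⟨rfl, rfl⟩
  · exact Or.inr ⟨hij.symm, hadj.symm⟩

theorem split_comm (G : SimpleGraph (Fin N)) {i j : Fin k} {q ℓ : Fin N} :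
    Split G i j q ℓ ↔ Split G j i ℓ q :=
  ⟨Split.swap, Split.swap⟩

def ETag.transpose : ETag → ETag
  | .Hor => .Ver
  | .Ver => .Hor
  | t => t

def DEdgeV.transpose : DEdgeV k N → DEdgeV k N
  | .grid i j q ℓ t => .grid j i ℓ q t.transpose
  | .a i => .c i
  | .b i => .d i
  | .c j => .a j
  | .d j => .b j

theorem DEdgeV.transpose_involutive : Function.Involutive (@DEdgeV.transpose k N) := by
  rintro (⟨i, j, q, ℓ, _ | _ | _ | _ | _⟩ | _ | _ | _ | _) <;> rfl

theorem DEdgeE.transpose {G : SimpleGraph (Fin N)} {x y : DEdgeV k N} (h : DEdgeE k N G x y) :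
    DEdgeE k N G x.transpose y.transpose := by
  cases h with
  | mid1 i j q ℓ h => exact .mid1 j i ℓ q (mt Split.swap h)
  | mid2 i j q ℓ h => exact .mid2 j i ℓ q (mt Split.swap h)
  | hor1 i j q ℓ h => exact .ver1 j i ℓ q h.swap
  | hor2 i j q ℓ h => exact .ver2 j i ℓ q h.swap
  | ver1 i j q ℓ h => exact .hor1 j i ℓ q h.swap
  | ver2 i j q ℓ h => exact .hor2 j i ℓ q h.swap
  | up i j q ℓ ℓ' h => exact .right j i ℓ ℓ' q h
  | right i j q q' ℓ h => exact .up j i ℓ q q' h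
  | hmatch i i' j q q' ℓ hi hq hq' => exact .vmatch j i i' ℓ q q' hi hq hq'
  | vmatch i j j' q ℓ ℓ' hj hl hl' => exact .hmatch j j' i ℓ ℓ' q hj hl hl'
  | srcA i j q ℓ hj hl => exact .srcC j i ℓ q hj hl
  | snkB i j q ℓ hj hl => exact .snkD j i ℓ q hj hl
  | srcC i j q ℓ hi hq => exact .srcA j i ℓ q hi hq
  | snkD i j q ℓ hi hq => exact .snkB j i ℓ q hi hq

theorem DEdgeE.transpose_iff {G : SimpleGraph (Fin N)} {x y : DEdgeV k N} :
    DEdgeE k N G x.transpose y.transpose ↔ DEdgeE k N G x y := by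
  refine ⟨fun h => ?_, DEdgeE.transpose⟩
  simpa only [DEdgeV.transpose_involutive _] using h.transpose

variable (G : SimpleGraph (Fin N)) [DecidableRel G.Adj]

theorem map_transpose_eTriple (i j : Fin k) (q ℓ : Fin N) (b : Bool) :
    (eTriple G i j q ℓ b).map DEdgeV.transpose = eTriple G j i ℓ q (!b) := by
  by_cases h : Split G i j q ℓ <;> cases b <;>
    simp [eTriple, DEdgeV.transpose, ETag.transpose, h, ← split_comm G]

theorem map_transpose_imageV (χ : Fin k → Fin N → Bool) (i : Fin k) (r : Fin N) :
    (imageV G χ i r).map DEdgeV.transpose = imageH G (fun j ℓ => !χ j ℓ) i r := by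
  simp [imageV, imageH, List.map_flatMap, map_transpose_eTriple, DEdgeV.transpose]

end Transpose

section VerticalPaths

variable {k N : ℕ}

def ETag.height : ETag → ℕ
  | .LB => 1
  | .TR => 3
  | _ => 2

def DEdgeV.colPos : DEdgeV k N → ℕ
  | .grid _ j _ ℓ t => 3 * (j * N + ℓ) + t.height
  | .a _ => 0
  | .b _ => 3 * (k * N) + 1
  | .c _ => 3 * (k * N)
  | .d _ => 0

theorem DEdgeE.colPos_le {G : SimpleGraph (Fin N)} {x y : DEdgeV k N} (h : DEdgeE k N G x y) :
    y.colPos ≤ x.colPos + 1 := by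
  cases h <;> simp only [DEdgeV.colPos, ETag.height] <;> try omega
  case vmatch _ j j' _ ℓ ℓ' hj hl hl' =>
    rw [hj, hl', add_one_mul]
    omega
  case srcA hj hl => simp [hj, hl]
  case snkB j _ ℓ hj hl =>
    have : k * N = j * N + N := by simp only [← hj, add_one_mul]
    omega
  case srcC j _ ℓ _ _ =>
    have : ((j : ℕ) + 1) * N ≤ k * N := Nat.mul_le_mul_right N j.isLt
    rw [add_one_mul] at this
    omega

variable (G : SimpleGraph (Fin N)) [DecidableRel G.Adj]

theorem eTriple_ne_nil {i j : Fin k} {q ℓ : Fin N} {b : Bool} : eTriple G i j q ℓ b ≠ [] := by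
  simp [eTriple]

theorem isChain_eTriple (i j : Fin k) (q ℓ : Fin N) (b : Bool) :
    (eTriple G i j q ℓ b).IsChain fun x y => DEdgeE k N G x y ∧ y.colPos = x.colPos + 1 := by
  by_cases h : Split G i j q ℓ <;> cases b <;>
    simp [eTriple, h, DEdgeV.colPos, ETag.height, DEdgeE.mid1, DEdgeE.mid2, DEdgeE.hor1,
      DEdgeE.hor2, DEdgeE.ver1, DEdgeE.ver2]

def imageVBlock (χ : Fin k → Fin N → Bool) (i j : Fin k) (r : Fin N) : List (DEdgeV k N) :=
  (List.finRange N).flatMap fun ℓ => eTriple G i j r ℓ (χ j ℓ)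

theorem imageV_eq_cons_flatMap (χ : Fin k → Fin N → Bool) (i : Fin k) (r : Fin N) :
    imageV G χ i r = .a i :: ((List.finRange k).flatMap (imageVBlock G χ i · r) ++ [.b i]) :=
  rfl

theorem head?_imageVBlock (χ : Fin k → Fin N → Bool) (i j : Fin k) (r ℓ : Fin N)
    (hℓ : (ℓ : ℕ) = 0) : (imageVBlock G χ i j r).head? = some (.grid i j r ℓ .LB) :=
  head?_flatMap_finRange ℓ hℓ (eTriple_ne_nil G)

theorem getLast?_imageVBlock (χ : Fin k → Fin N → Bool) (i j : Fin k) (r ℓ : Fin N)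
    (hℓ : (ℓ : ℕ) + 1 = N) : (imageVBlock G χ i j r).getLast? = some (.grid i j r ℓ .TR) :=
  getLast?_flatMap_finRange ℓ hℓ (eTriple_ne_nil G)

theorem imageVBlock_ne_nil (χ : Fin k → Fin N → Bool) (i j : Fin k) (r : Fin N) :
    imageVBlock G χ i j r ≠ [] := fun h => by
  simpa [h] using head?_imageVBlock G χ i j r ⟨0, r.pos⟩ rfl

theorem isChain_imageVBlock (χ : Fin k → Fin N → Bool) (i j : Fin k) (r : Fin N) :
    (imageVBlock G χ i j r).IsChain fun x y => DEdgeE k N G x y ∧ y.colPos = x.colPos + 1 := by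
  refine List.isChain_flatMap (fun _ _ => eTriple_ne_nil G) (fun _ _ => isChain_eTriple ..)
    ((isChain_finRange_succ N).imp fun ℓ ℓ' hℓ x hx y hy => ?_)
  simp only [eTriple, List.getLast?_cons_cons, List.getLast?_singleton, List.head?_cons,
    Option.mem_def, Option.some.injEq] at hx hy
  subst hx hy
  exact ⟨.up _ _ _ _ _ hℓ, by simp only [DEdgeV.colPos, ETag.height]; omega⟩

theorem isChain_imageV (χ : Fin k → Fin N → Bool) (i : Fin k) (r : Fin N) :
    (imageV G χ i r).IsChain fun x y => DEdgeE k N G x y ∧ y.colPos = x.colPos + 1 := by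
  have hN := r.pos
  have hk := i.pos
  have hbody := List.isChain_flatMap (fun j _ => imageVBlock_ne_nil G χ i j r)
    (fun j _ => isChain_imageVBlock G χ i j r)
    ((isChain_finRange_succ k).imp fun j j' hj x hx y hy => by
      rw [getLast?_imageVBlock G χ i j r ⟨N - 1, by omega⟩ (by simp; omega), Option.mem_def,
        Option.some.injEq] at hx
      rw [head?_imageVBlock G χ i j' r ⟨0, hN⟩ rfl, Option.mem_def, Option.some.injEq] at hy
      subst hx hy
      refine ⟨.vmatch _ _ _ _ _ _ hj (by simp; omega) rfl, ?_⟩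
      simp only [DEdgeV.colPos, ETag.height, hj, add_one_mul]
      omega)
  rw [imageV_eq_cons_flatMap]
  refine List.isChain_cons.2 ⟨fun y hy => ?_, hbody.append (List.isChain_singleton _) ?_⟩
  · rw [List.head?_append, head?_flatMap_finRange ⟨0, hk⟩ rfl (imageVBlock_ne_nil G χ i _ r),
      head?_imageVBlock G χ i _ r ⟨0, hN⟩ rfl] at hy
    obtain rfl : y = _ := by simpa using hy.symm
    exact ⟨.srcA _ _ _ _ rfl rfl, by simp [DEdgeV.colPos, ETag.height]⟩
  · intro x hx y hy
    rw [getLast?_flatMap_finRange ⟨k - 1, by omega⟩ (by simp; omega) (imageVBlock_ne_nil G χ i _ r),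
      getLast?_imageVBlock G χ i _ r ⟨N - 1, by omega⟩ (by simp; omega), Option.mem_def,
      Option.some.injEq] at hx
    simp only [List.head?_cons, Option.mem_def, Option.some.injEq] at hy
    subst hx hy
    refine ⟨.snkB _ _ _ _ (by simp; omega) (by simp; omega), ?_⟩
    have : k * N = (k - 1) * N + N := by
      rw [← add_one_mul, Nat.sub_one_add_one hk.ne']
    simp only [DEdgeV.colPos, ETag.height]
    omega

theorem isShortestDirPath_imageV (χ : Fin k → Fin N → Bool) (i : Fin k) (r : Fin N) :
    IsShortestDirPath (DEdgeE k N G) (.a i) (.b i) (imageV G χ i r) :=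
  isShortestDirPath_of_tight DEdgeV.colPos (fun _ _ => DEdgeE.colPos_le) (isChain_imageV G χ i r)
    rfl (by rw [imageV, ← List.cons_append, List.getLast?_concat])

theorem mem_imageV {χ : Fin k → Fin N → Bool} {i : Fin k} {r : Fin N} {x : DEdgeV k N}
    (hx : x ∈ imageV G χ i r) : x = .a i ∨ x = .b i ∨ ∃ j ℓ t, x = .grid i j r ℓ t := by
  simp only [imageV, eTriple, List.mem_cons, List.mem_append, List.mem_flatMap,
    List.mem_finRange, List.not_mem_nil, or_false, true_and] at hx
  rcases hx with rfl | ⟨j, ℓ, rfl | rfl | rfl⟩ | rfl <;> simp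

theorem vertDisj_imageV {i i' : Fin k} (h : i ≠ i') (χ χ' : Fin k → Fin N → Bool)
    (r r' : Fin N) : VertDisj (imageV G χ i r) (imageV G χ' i' r') := by
  intro x hx hx'
  rcases mem_imageV G hx with rfl | rfl | ⟨j, ℓ, t, rfl⟩ <;>
    rcases mem_imageV G hx' with h' | h' | ⟨j', ℓ', t', h'⟩ <;> simp_all

end VerticalPaths

section Crossing

variable {k N : ℕ} (G : SimpleGraph (Fin N)) [DecidableRel G.Adj]

theorem isShortestDirPath_imageH (χ : Fin k → Fin N → Bool) (j : Fin k) (r : Fin N) :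
    IsShortestDirPath (DEdgeE k N G) (.c j) (.d j) (imageH G χ j r) := by
  simpa [map_transpose_imageV, DEdgeV.transpose] using
    (isShortestDirPath_imageV G (fun i q => !χ i q) j r).map_equiv
      (DEdgeV.transpose_involutive.toPerm _) fun _ _ => DEdgeE.transpose_iff

theorem edgeDisj_imageH {j j' : Fin k} (h : j ≠ j') (χ χ' : Fin k → Fin N → Bool)
    (r r' : Fin N) : EdgeDisj (imageH G χ j r) (imageH G χ' j' r') := by
  simpa [map_transpose_imageV] using
    ((vertDisj_imageV G h (fun i q => !χ i q) (fun i q => !χ' i q) r r').edgeDisj).map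
      DEdgeV.transpose_involutive.injective

theorem mem_canonEdgeV_canonEdgeH {i j : Fin k} {r r' : Fin N} (hs : Split G i j r r')
    {x : DEdgeV k N} (hV : x ∈ canonEdgeV G i r) (hH : x ∈ canonEdgeH G j r') :
    x = .grid i j r r' .LB ∨ x = .grid i j r r' .TR := by
  simp only [canonEdgeV, canonEdgeH, imageV, imageH, eTriple, List.mem_cons, List.mem_append,
    List.mem_flatMap, List.mem_finRange, List.not_mem_nil, or_false, true_and] at hV hH
  aesop

theorem edgeDisj_canonEdgeV_canonEdgeH {i j : Fin k} {r r' : Fin N} (hs : Split G i j r r') :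
    EdgeDisj (canonEdgeV G i r) (canonEdgeH G j r') := by
  intro e hV hH
  have hstep := (isChain_imageV G _ i r).rel_of_mem_dirEdges hV
  rcases mem_canonEdgeV_canonEdgeH G hs (mem_of_mem_dirEdges hV).1 (mem_of_mem_dirEdges hH).1
    with h₁ | h₁ <;>
  rcases mem_canonEdgeV_canonEdgeH G hs (mem_of_mem_dirEdges hV).2 (mem_of_mem_dirEdges hH).2
    with h₂ | h₂ <;>
  simp [h₁, h₂, DEdgeV.colPos, ETag.height] at hstep

end Crossing

theorem DEdge_completeness_general (N k : ℕ)
    (G : SimpleGraph (Fin N)) [DecidableRel G.Adj]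
    (γ : Fin k → Fin N)
    (hadj : ∀ i i' : Fin k, i ≠ i' → G.Adj (γ i) (γ i')) :
    (∀ i : Fin k,
      IsShortestDirPath (DEdgeE k N G) (DEdgeV.a i) (DEdgeV.b i) (canonEdgeV G i (γ i))) ∧
    (∀ j : Fin k,
      IsShortestDirPath (DEdgeE k N G) (DEdgeV.c j) (DEdgeV.d j) (canonEdgeH G j (γ j))) ∧
    (∀ i i' : Fin k, i ≠ i' →
      EdgeDisj (canonEdgeV G i (γ i)) (canonEdgeV G i' (γ i'))) ∧
    (∀ j j' : Fin k, j ≠ j' →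
      EdgeDisj (canonEdgeH G j (γ j)) (canonEdgeH G j' (γ j'))) ∧
    (∀ i j : Fin k, EdgeDisj (canonEdgeV G i (γ i)) (canonEdgeH G j (γ j))) := by
  have hsplit (i j : Fin k) : Split G i j (γ i) (γ j) := by
    by_cases h : i = j
    · exact Or.inl ⟨h, h ▸ rfl⟩
    · exact Or.inr ⟨h, hadj i j h⟩
  exact ⟨fun i => isShortestDirPath_imageV G _ i _, fun j => isShortestDirPath_imageH G _ j _,
    fun i i' h => (vertDisj_imageV G h _ _ _ _).edgeDisj, fun j j' h => edgeDisj_imageH G h _ _ _ _,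
    fun i j => edgeDisj_canonEdgeV_canonEdgeH G (hsplit i j)⟩

/-- if `G` contains a clique `{v_{γ_1},…,v_{γ_k}}` of size `k` (`k`
distinct, pairwise adjacent vertices), then the `2k` directed paths
`Canonical_edge(γ_i; a_i⇝b_i)` (`i ∈ [k]`) and `Canonical_edge(γ_j; c_j⇝d_j)`
(`j ∈ [k]`) are pairwise edge-disjoint and each is a shortest path in `D_edge` between
its terminal pair: all `2k` terminal pairs of `(D_edge, T)` are simultaneously
satisfied. -/
theorem DEdge_completeness (N k : ℕ) (hN : 1 ≤ N) (hk : 1 ≤ k)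
    (G : SimpleGraph (Fin N)) [DecidableRel G.Adj]
    (γ : Fin k → Fin N) (hinj : Function.Injective γ)
    (hadj : ∀ i i' : Fin k, i ≠ i' → G.Adj (γ i) (γ i')) :
    (∀ i : Fin k,
      IsShortestDirPath (DEdgeE k N G) (DEdgeV.a i) (DEdgeV.b i) (canonEdgeV G i (γ i))) ∧
    (∀ j : Fin k,
      IsShortestDirPath (DEdgeE k N G) (DEdgeV.c j) (DEdgeV.d j) (canonEdgeH G j (γ j))) ∧
    (∀ i i' : Fin k, i ≠ i' →
      EdgeDisj (canonEdgeV G i (γ i)) (canonEdgeV G i' (γ i'))) ∧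
    (∀ j j' : Fin k, j ≠ j' →
      EdgeDisj (canonEdgeH G j (γ j)) (canonEdgeH G j' (γ j'))) ∧
    (∀ i j : Fin k, EdgeDisj (canonEdgeV G i (γ i)) (canonEdgeH G j (γ j))) :=
  DEdge_completeness_general N k G γ hadj
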